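/- Let n ≥ 1. In ℤ[X₀, …, X_{n−1}], let I′ be the ideal generated by Xᵢ² − (−2·Xᵢ + X_{i+1}) for 0 ≤ i ≤ n−2 together with X_{n−1}². Then for every polynomial f ∈ ℤ[X₀, …, X_{n−1}] there exists a unique multilinear polynomial g (every exponent in every monomial of its support is at most 1) such that f − g ∈ I′. -/

import Mathlib

open MvPolynomial

/-- The generators of the ideal `I′`: `Xᵢ² − (−2Xᵢ + X_{i+1})` for `i ≤ n-2`, and `X_{n-1}²`. -/
noncomputable def gens' (n : ℕ) : Fin n → MvPolynomial (Fin n) ℤ := fun i =>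
  if h : (i : ℕ) + 1 < n then X i ^ 2 - (-2 * X i + X ⟨(i : ℕ) + 1, h⟩) else X i ^ 2

/-!
Existence: reduce `Xᵢ² ↦ −2Xᵢ + X_{i+1}` and `X_{n−1}² ↦ 0` until the polynomial is multilinear.

Uniqueness: substitute `Xᵢ ↦ Y^(2^i) − 1`. As `(Y^a − 1)² + 2(Y^a − 1) = Y^(2a) − 1`, every
generator but `X_{n−1}²` maps to `0`, so the ideal maps into the multiples of `(Y^(2^(n−1)) − 1)²`,
of degree `≥ 2ⁿ`. A multilinear monomial `X^m` maps to a monic polynomial whose degree is the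
binary number `∑ mᵢ 2ⁱ < 2ⁿ`; distinct multilinear monomials give distinct degrees, so a nonzero
multilinear polynomial maps to a nonzero polynomial of degree `< 2ⁿ`, which is not in the ideal.
-/

open scoped Polynomial

namespace Gould

variable {n : ℕ}

noncomputable def gouldIdeal (n : ℕ) : Ideal (MvPolynomial (Fin n) ℤ) :=
  Ideal.span (Set.range (gens' n))

/-- Rewriting `Xᵢ² ↦ −2Xᵢ + X_{i+1}` strictly lowers the weight of a monomial, because
`varWeight n (i + 1) < 2 * varWeight n i`. -/
def varWeight (n : ℕ) (i : Fin n) : ℕ := 2 ^ (i : ℕ) * (n - i)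

lemma varWeight_pos (i : Fin n) : 0 < varWeight n i :=
  Nat.mul_pos (Nat.two_pow_pos _) (Nat.sub_pos_of_lt i.isLt)

lemma varWeight_succ_lt (i : Fin n) (h : (i : ℕ) + 1 < n) :
    varWeight n ⟨i + 1, h⟩ < 2 * varWeight n i := by
  rw [varWeight, varWeight, pow_succ, mul_comm 2, mul_assoc, mul_assoc]
  exact Nat.mul_lt_mul_of_pos_left (by simp only; omega) (Nat.two_pow_pos _)

lemma monomial_one_mem_gouldIdeal_sup (m : Fin n →₀ ℕ) :
    monomial m 1 ∈ (gouldIdeal n).restrictScalars ℤ ⊔ restrictDegree (Fin n) ℤ 1 := by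
  by_cases! hm : ∀ i, m i ≤ 1
  · exact Submodule.mem_sup_right ((monomial_mem_restrictSupport ℤ).2 (.inl hm))
  obtain ⟨i, hi⟩ := hm
  obtain ⟨m', rfl⟩ : ∃ m', m = m' + Finsupp.single i 2 :=
    ⟨_, (tsub_add_cancel_of_le (Finsupp.single_le_iff.2 hi)).symm⟩
  have hX (j : Fin n) : monomial m' (1 : ℤ) * X j = monomial (m' + Finsupp.single j 1) 1 := by
    rw [monomial_add_single, pow_one]
  have hgen : monomial m' 1 * gens' n i ∈
      (gouldIdeal n).restrictScalars ℤ ⊔ restrictDegree (Fin n) ℤ 1 :=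
    Submodule.mem_sup_left (Ideal.mul_mem_left _ _ (Ideal.subset_span ⟨i, rfl⟩))
  rw [monomial_add_single]
  by_cases h : (i : ℕ) + 1 < n
  · have hred : monomial m' (1 : ℤ) * X i ^ 2 = monomial m' 1 * gens' n i
        + (-2 : ℤ) • monomial (m' + Finsupp.single i 1) 1
        + monomial (m' + Finsupp.single ⟨i + 1, h⟩ 1) 1 := by
      rw [← hX, ← hX, gens', dif_pos h, zsmul_eq_mul]
      push_cast
      ring
    rw [hred]
    exact add_mem (add_mem hgen (Submodule.smul_mem _ _ (monomial_one_mem_gouldIdeal_sup _)))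
      (monomial_one_mem_gouldIdeal_sup _)
  · rwa [← (dif_neg h : gens' n i = X i ^ 2)]
termination_by Finsupp.weight (varWeight n) m
decreasing_by
  all_goals
    subst_vars
    simp only [map_add, Finsupp.weight_single, smul_eq_mul]
  · have := varWeight_pos i
    omega
  · have := varWeight_succ_lt i h
    omega

lemma exists_multilinear_sub_mem (f : MvPolynomial (Fin n) ℤ) :
    ∃ g ∈ restrictDegree (Fin n) ℤ 1, f - g ∈ gouldIdeal n := by
  have hf : f ∈ (gouldIdeal n).restrictScalars ℤ ⊔ restrictDegree (Fin n) ℤ 1 := by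
    induction f using MvPolynomial.induction_on' with
    | monomial m c =>
      rw [← mul_one c, ← smul_eq_mul, ← smul_monomial]
      exact Submodule.smul_mem _ c (monomial_one_mem_gouldIdeal_sup m)
    | add p q hp hq => exact add_mem hp hq
  obtain ⟨a, ha, g, hg, rfl⟩ := Submodule.mem_sup.1 hf
  exact ⟨g, hg, by simpa using ha⟩

noncomputable def binaryWeight (n : ℕ) : (Fin n →₀ ℕ) →+ ℕ :=
  Finsupp.weight fun i : Fin n => 2 ^ (i : ℕ)

lemma binaryWeight_eq_geomSum {m : Fin n →₀ ℕ} (hm : ∀ i, m i ≤ 1) :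
    binaryWeight n m = ∑ k ∈ m.support.map Fin.valEmbedding, 2 ^ k := by
  rw [binaryWeight, Finsupp.weight_apply, Finsupp.sum, Finset.sum_map]
  refine Finset.sum_congr rfl fun i hi => ?_
  rw [le_antisymm (hm i) (Nat.one_le_iff_ne_zero.2 (Finsupp.mem_support_iff.1 hi)), one_smul]
  rfl

lemma binaryWeight_lt {m : Fin n →₀ ℕ} (hm : ∀ i, m i ≤ 1) : binaryWeight n m < 2 ^ n := by
  rw [binaryWeight_eq_geomSum hm]
  exact Nat.geomSum_lt le_rfl (by simp)

lemma binaryWeight_injOn : Set.InjOn (binaryWeight n) {m | ∀ i, m i ≤ 1} := by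
  intro m hm m' hm' h
  rw [binaryWeight_eq_geomSum hm, binaryWeight_eq_geomSum hm'] at h
  have hsupp := Finset.map_injective _ (Finset.geomSum_injective le_rfl h)
  ext i
  have := hm i
  have := hm' i
  by_cases hi : i ∈ m.support
  · have hi' := hsupp ▸ hi
    rw [Finsupp.mem_support_iff] at hi hi'
    omega
  · have hi' := hsupp ▸ hi
    rw [Finsupp.notMem_support_iff] at hi hi'
    omega

noncomputable def evalPow (n : ℕ) : MvPolynomial (Fin n) ℤ →ₐ[ℤ] ℤ[X] :=
  aeval fun i => Polynomial.X ^ 2 ^ (i : ℕ) - 1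

lemma monic_X_pow_two_pow_sub_one (k : ℕ) : (Polynomial.X ^ 2 ^ k - 1 : ℤ[X]).Monic := by
  simpa using Polynomial.monic_X_pow_sub_C (1 : ℤ) (Nat.two_pow_pos k).ne'

lemma natDegree_X_pow_two_pow_sub_one (k : ℕ) :
    (Polynomial.X ^ 2 ^ k - 1 : ℤ[X]).natDegree = 2 ^ k := by
  simpa using Polynomial.natDegree_X_pow_sub_C (n := 2 ^ k) (r := (1 : ℤ))

lemma evalPow_monomial (m : Fin n →₀ ℕ) (c : ℤ) :
    evalPow n (monomial m c) =
      Polynomial.C c * ∏ i : Fin n, (Polynomial.X ^ 2 ^ (i : ℕ) - 1) ^ m i := by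
  rw [evalPow, aeval_monomial, Finsupp.prod_fintype _ _ fun _ => pow_zero _,
    Polynomial.algebraMap_eq]

lemma degree_evalPow_monomial (m : Fin n →₀ ℕ) {c : ℤ} (hc : c ≠ 0) :
    (evalPow n (monomial m c)).degree = binaryWeight n m := by
  have hmonic : ∀ i : Fin n, ((Polynomial.X ^ 2 ^ (i : ℕ) - 1 : ℤ[X]) ^ m i).Monic :=
    fun i => (monic_X_pow_two_pow_sub_one i).pow _
  have hprod : (∏ i : Fin n, (Polynomial.X ^ 2 ^ (i : ℕ) - 1 : ℤ[X]) ^ m i).Monic :=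
    Polynomial.monic_prod_of_monic _ _ fun i _ => hmonic i
  rw [evalPow_monomial, Polynomial.degree_C_mul hc, Polynomial.degree_eq_natDegree hprod.ne_zero,
    Polynomial.natDegree_prod_of_monic _ _ fun i _ => hmonic i, binaryWeight,
    Finsupp.weight_eq_sum]
  simp [Polynomial.natDegree_pow, natDegree_X_pow_two_pow_sub_one, mul_comm]

lemma degree_evalPow {g : MvPolynomial (Fin n) ℤ} (hg : g ∈ restrictDegree (Fin n) ℤ 1) :
    (evalPow n g).degree = g.support.sup fun m => (binaryWeight n m : WithBot ℕ) := by
  rw [mem_restrictDegree] at hg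
  conv_lhs => rw [g.as_sum, map_sum]
  rw [Polynomial.degree_sum_eq_of_disjoint]
  · exact Finset.sup_congr rfl fun m hm => degree_evalPow_monomial m (mem_support_iff.1 hm)
  · intro m hm m' hm' hne
    simp only [Function.onFun, Function.comp_apply, degree_evalPow_monomial _
      (mem_support_iff.1 hm.1), degree_evalPow_monomial _ (mem_support_iff.1 hm'.1), ne_eq,
      Nat.cast_inj]
    exact fun h => hne (binaryWeight_injOn (hg m hm.1) (hg m' hm'.1) h)

lemma evalPow_gens'_dvd (i : Fin n) :
    (Polynomial.X ^ 2 ^ (n - 1) - 1 : ℤ[X]) ^ 2 ∣ evalPow n (gens' n i) := by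
  by_cases h : (i : ℕ) + 1 < n
  · suffices evalPow n (gens' n i) = 0 from this ▸ dvd_zero _
    rw [gens', dif_pos h]
    simp only [evalPow, map_sub, map_add, map_mul, map_pow, map_neg, map_ofNat, aeval_X]
    rw [pow_succ 2 (i : ℕ), pow_mul]
    ring
  · rw [gens', dif_neg h, map_pow, evalPow, aeval_X, show (i : ℕ) = n - 1 by omega]

lemma dvd_evalPow_of_mem {f : MvPolynomial (Fin n) ℤ} (hf : f ∈ gouldIdeal n) :
    (Polynomial.X ^ 2 ^ (n - 1) - 1 : ℤ[X]) ^ 2 ∣ evalPow n f := by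
  have hle : gouldIdeal n ≤
      (Ideal.span {(Polynomial.X ^ 2 ^ (n - 1) - 1 : ℤ[X]) ^ 2}).comap (evalPow n) :=
    Ideal.span_le.2 <| by
      rintro _ ⟨i, rfl⟩
      exact Ideal.mem_span_singleton.2 (evalPow_gens'_dvd i)
  exact Ideal.mem_span_singleton.1 (hle hf)

lemma eq_zero_of_mem_gouldIdeal {g : MvPolynomial (Fin n) ℤ}
    (hg : g ∈ restrictDegree (Fin n) ℤ 1) (hI : g ∈ gouldIdeal n) : g = 0 := by
  by_contra hg0
  obtain ⟨m, hm⟩ := support_nonempty.2 hg0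
  have hdeg := degree_evalPow hg
  have hne : evalPow n g ≠ 0 := by
    intro h
    have := Finset.le_sup (f := fun m => (binaryWeight n m : WithBot ℕ)) hm
    rw [← hdeg, h, Polynomial.degree_zero] at this
    exact WithBot.not_coe_le_bot _ this
  have hlt : (evalPow n g).natDegree < 2 ^ n := by
    rw [Polynomial.natDegree_lt_iff_degree_lt hne, hdeg]
    refine (Finset.sup_lt_iff (WithBot.bot_lt_coe _)).2 fun m hm => ?_
    exact_mod_cast binaryWeight_lt ((mem_restrictDegree _ _ _).1 hg m hm)
  have hle := Polynomial.natDegree_le_of_dvd (dvd_evalPow_of_mem hI) hne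
  rw [Polynomial.natDegree_pow, natDegree_X_pow_two_pow_sub_one, ← pow_succ'] at hle
  have := Nat.pow_le_pow_right two_pos (show n ≤ n - 1 + 1 by omega)
  omega

end Gould

theorem stmt12_general (n : ℕ) (f : MvPolynomial (Fin n) ℤ) :
    ∃! g : MvPolynomial (Fin n) ℤ,
      (∀ m ∈ g.support, ∀ i : Fin n, m i ≤ 1) ∧
      f - g ∈ Ideal.span (Set.range (gens' n)) := by
  simp only [← mem_restrictDegree]
  obtain ⟨g, hg, hfg⟩ := Gould.exists_multilinear_sub_mem f
  refine ⟨g, ⟨hg, hfg⟩, fun g' ⟨hg', hfg'⟩ => sub_eq_zero.1 ?_⟩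
  refine Gould.eq_zero_of_mem_gouldIdeal (sub_mem hg' hg) ?_
  simpa only [sub_sub_sub_cancel_left] using sub_mem hfg hfg'

theorem stmt12 (n : ℕ) (hn : 1 ≤ n) (f : MvPolynomial (Fin n) ℤ) :
    ∃! g : MvPolynomial (Fin n) ℤ,
      (∀ m ∈ g.support, ∀ i : Fin n, m i ≤ 1) ∧
      f - g ∈ Ideal.span (Set.range (gens' n)) :=
  stmt12_general n f
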